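/- (Lower bound chain for the StoPS step size, Eq. (9).) Assume each f_i is convex and L-smooth with L > 0. Then for every x ∈ E, every point x* at which all ∇f_i are defined, and every minibatch s with H_s(x) ≠ 0, one has γ^StoPS_s(x) ≥ (1/L)·γ^GraDS_s(x) ≥ 1/L; in particular the adjusted gradient diversity satisfies γ^GraDS_s(x) ≥ 1. -/

import Mathlib

open scoped BigOperators RealInnerProductSpace

variable {E : Type*} [NormedAddCommGroup E] [InnerProductSpace ℝ E] [CompleteSpace E]

lemma line_hasDerivAt (f : E → ℝ) (hdiff : Differentiable ℝ f) (a v : E) (t : ℝ) :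
    HasDerivAt (fun t : ℝ => f (a + t • v)) ⟪gradient f (a + t • v), v⟫ t := by
  have hc : HasDerivAt (fun t : ℝ => a + t • v) v t := by
    simpa using ((hasDerivAt_id t).smul_const v).const_add a
  have hf := (hdiff (a + t • v)).hasGradientAt.hasFDerivAt
  exact hf.comp_hasDerivAt t hc

lemma convex_tangent (f : E → ℝ) (hdiff : Differentiable ℝ f)
    (hconv : ConvexOn ℝ Set.univ f) (y z : E) :
    f y + ⟪gradient f y, z - y⟫ ≤ f z := by
  set g : ℝ → ℝ := fun t => f (y + t • (z - y)) with hg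
  have hgconv : ConvexOn ℝ Set.univ g := by
    have := hconv.comp_affineMap (AffineMap.lineMap y z : ℝ →ᵃ[ℝ] E)
    have h2 : g = f ∘ (AffineMap.lineMap y z : ℝ →ᵃ[ℝ] E) := by
      funext t
      simp [hg, AffineMap.lineMap_apply, Function.comp]
      congr 1
      module
    rw [h2]
    exact this.subset (Set.subset_univ _) (convex_univ)
  have hderiv : HasDerivAt g ⟪gradient f y, z - y⟫ 0 := by
    have := line_hasDerivAt f hdiff y (z - y) 0
    simpa using this
  have := hgconv.le_slope_of_hasDerivAt (Set.mem_univ 0) (Set.mem_univ 1) zero_lt_one hderiv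
  have hslope : slope g 0 1 = f z - f y := by
    simp [slope_def_field, hg]
  rw [hslope] at this
  linarith

lemma descent_lemma (f : E → ℝ) (hdiff : Differentiable ℝ f)
    (L : ℝ) (hL : 0 < L)
    (hlip : ∀ u w : E, ‖gradient f u - gradient f w‖ ≤ L * ‖u - w‖) (a b : E) :
    f b ≤ f a + ⟪gradient f a, b - a⟫ + L / 2 * ‖b - a‖ ^ 2 := by
  set v := b - a with hv
  set φ : ℝ → ℝ := fun t => ⟪gradient f (a + t • v), v⟫ with hφ
  have hgradcont : Continuous (gradient f) := by
    have : LipschitzWith (Real.toNNReal L) (gradient f) := by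
      apply LipschitzWith.of_dist_le_mul
      intro u w
      rw [dist_eq_norm, dist_eq_norm]
      calc ‖gradient f u - gradient f w‖ ≤ L * ‖u - w‖ := hlip u w
        _ = (Real.toNNReal L) * ‖u - w‖ := by rw [Real.coe_toNNReal _ hL.le]
    exact this.continuous
  have hφcont : Continuous φ := by
    apply Continuous.inner
    · exact hgradcont.comp (by continuity)
    · exact continuous_const
  have hderiv : ∀ t ∈ Set.uIcc (0:ℝ) 1, HasDerivAt (fun t : ℝ => f (a + t • v)) (φ t) t :=
    fun t _ => line_hasDerivAt f hdiff a v t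
  have hFTC : ∫ t in (0:ℝ)..1, φ t = f (a + (1:ℝ) • v) - f (a + (0:ℝ) • v) := by
    have := intervalIntegral.integral_eq_sub_of_hasDerivAt hderiv
      (hφcont.intervalIntegrable 0 1)
    simpa using this
  have hbound : ∫ t in (0:ℝ)..1, φ t ≤ ∫ t in (0:ℝ)..1, (φ 0 + L * ‖v‖ ^ 2 * t) := by
    apply intervalIntegral.integral_mono_on zero_le_one (hφcont.intervalIntegrable 0 1)
      ((by fun_prop : Continuous fun t : ℝ => φ 0 + L * ‖v‖ ^ 2 * t).intervalIntegrable 0 1)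
    intro t ht
    have h1 : φ t - φ 0 = ⟪gradient f (a + t • v) - gradient f (a + (0:ℝ) • v), v⟫ := by
      rw [inner_sub_left]
    have h2 : φ t - φ 0 ≤ L * ‖v‖ ^ 2 * t := by
      rw [h1]
      calc ⟪gradient f (a + t • v) - gradient f (a + (0:ℝ) • v), v⟫
          ≤ ‖gradient f (a + t • v) - gradient f (a + (0:ℝ) • v)‖ * ‖v‖ :=
            real_inner_le_norm _ _
        _ ≤ (L * ‖(a + t • v) - (a + (0:ℝ) • v)‖) * ‖v‖ := by
            have := hlip (a + t • v) (a + (0:ℝ) • v)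
            nlinarith [norm_nonneg v]
        _ = L * ‖v‖ ^ 2 * t := by
            have : (a + t • v) - (a + (0:ℝ) • v) = t • v := by module
            rw [this, norm_smul]
            simp [abs_of_nonneg ht.1]
            ring
    linarith
  have hint : ∫ t in (0:ℝ)..1, (φ 0 + L * ‖v‖ ^ 2 * t) = φ 0 + L * ‖v‖ ^ 2 / 2 := by
    rw [intervalIntegral.integral_add (intervalIntegrable_const)
      ((by fun_prop : Continuous fun t : ℝ => L * ‖v‖ ^ 2 * t).intervalIntegrable 0 1)]
    rw [intervalIntegral.integral_const_mul]
    simp [integral_id]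
    ring
  have hφ0 : φ 0 = ⟪gradient f a, b - a⟫ := by simp [hφ, hv]
  have h10 : f (a + (1:ℝ) • v) = f b := by norm_num [hv]
  have h00 : f (a + (0:ℝ) • v) = f a := by norm_num
  rw [h10, h00] at hFTC
  rw [hint, hφ0] at hbound
  linarith [hFTC ▸ hbound]

lemma cocoercivity (f : E → ℝ) (hdiff : Differentiable ℝ f)
    (hconv : ConvexOn ℝ Set.univ f) (L : ℝ) (hL : 0 < L)
    (hlip : ∀ u w : E, ‖gradient f u - gradient f w‖ ≤ L * ‖u - w‖) (x y : E) :
    ‖gradient f x - gradient f y‖ ^ 2 ≤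
      2 * L * (f x - f y - ⟪gradient f y, x - y⟫) := by
  set g := gradient f x - gradient f y with hg
  set b := x - L⁻¹ • g with hb
  have hdesc := descent_lemma f hdiff L hL hlip x b
  have htan := convex_tangent f hdiff hconv y b
  have hbx : b - x = -(L⁻¹ • g) := by rw [hb]; module
  have hby : b - y = (x - y) - L⁻¹ • g := by rw [hb]; module
  have e1 : ⟪gradient f x, b - x⟫ = -(L⁻¹ * ⟪gradient f x, g⟫) := by
    rw [hbx, inner_neg_right, real_inner_smul_right]
  have e2 : ‖b - x‖ ^ 2 = L⁻¹ ^ 2 * ‖g‖ ^ 2 := by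
    rw [hbx, norm_neg, norm_smul, Real.norm_eq_abs, abs_inv, abs_of_pos hL]
    ring
  have e3 : ⟪gradient f y, b - y⟫ = ⟪gradient f y, x - y⟫ - L⁻¹ * ⟪gradient f y, g⟫ := by
    rw [hby, inner_sub_right, real_inner_smul_right]
  have e4 : ⟪gradient f x, g⟫ - ⟪gradient f y, g⟫ = ‖g‖ ^ 2 := by
    rw [← inner_sub_left, ← hg, real_inner_self_eq_norm_sq]
  rw [e1, e2] at hdesc
  rw [e3] at htan
  have hhalf : L / 2 * (L⁻¹ ^ 2 * ‖g‖ ^ 2) = L⁻¹ * ‖g‖ ^ 2 / 2 := by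
    field_simp
  have e4' : L⁻¹ * ⟪gradient f x, g⟫ - L⁻¹ * ⟪gradient f y, g⟫ = L⁻¹ * ‖g‖ ^ 2 := by
    rw [← mul_sub, e4]
  have hkey : L⁻¹ * ‖g‖ ^ 2 / 2 ≤ f x - f y - ⟪gradient f y, x - y⟫ := by linarith
  have hfin := mul_le_mul_of_nonneg_left hkey (by positivity : (0:ℝ) ≤ 2 * L)
  calc ‖g‖ ^ 2 = 2 * L * (L⁻¹ * ‖g‖ ^ 2 / 2) := by field_simp
    _ ≤ _ := hfin

/-- Lower bound chain for the StoPS step size (Eq. (9)):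
`γ^StoPS ≥ (1/L)·γ^GraDS ≥ 1/L`, and in particular `γ^GraDS ≥ 1`. -/
theorem stops_ge_inv_L_grads
    (d N n : ℕ) (hN : 1 ≤ N) (hn : 1 ≤ n)
    (f : Fin N → EuclideanSpace ℝ (Fin d) → ℝ)
    (hdiff : ∀ i, Differentiable ℝ (f i))
    (hconv : ∀ i, ConvexOn ℝ Set.univ (f i))
    (L : ℝ) (hL : 0 < L)
    (hsmooth : ∀ i (x y : EuclideanSpace ℝ (Fin d)),
      ‖gradient (f i) x - gradient (f i) y‖ ≤ L * ‖x - y‖)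
    (x xstar : EuclideanSpace ℝ (Fin d)) (s : Fin n → Fin N)
    (hHne : (n : ℝ)⁻¹ • ∑ j, (gradient (f (s j)) x - gradient (f (s j)) xstar) ≠ 0) :
    L⁻¹ * (((n : ℝ)⁻¹ * ∑ j, ‖gradient (f (s j)) x - gradient (f (s j)) xstar‖ ^ 2)
          / ‖(n : ℝ)⁻¹ • ∑ j, (gradient (f (s j)) x - gradient (f (s j)) xstar)‖ ^ 2)
        ≤ 2 * ((n : ℝ)⁻¹ * ∑ j, (f (s j) x - f (s j) xstar
              - ⟪gradient (f (s j)) xstar, x - xstar⟫))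
            / ‖(n : ℝ)⁻¹ • ∑ j, (gradient (f (s j)) x - gradient (f (s j)) xstar)‖ ^ 2
    ∧ L⁻¹ ≤ L⁻¹ * (((n : ℝ)⁻¹ * ∑ j, ‖gradient (f (s j)) x - gradient (f (s j)) xstar‖ ^ 2)
          / ‖(n : ℝ)⁻¹ • ∑ j, (gradient (f (s j)) x - gradient (f (s j)) xstar)‖ ^ 2)
    ∧ 1 ≤ ((n : ℝ)⁻¹ * ∑ j, ‖gradient (f (s j)) x - gradient (f (s j)) xstar‖ ^ 2)
          / ‖(n : ℝ)⁻¹ • ∑ j, (gradient (f (s j)) x - gradient (f (s j)) xstar)‖ ^ 2 := by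
  have hn0 : (0:ℝ) < n := by exact_mod_cast hn
  set g : Fin n → EuclideanSpace ℝ (Fin d) :=
    fun j => gradient (f (s j)) x - gradient (f (s j)) xstar with hgdef
  set H : EuclideanSpace ℝ (Fin d) := (n : ℝ)⁻¹ • ∑ j, g j with hHdef
  set A : ℝ := (n : ℝ)⁻¹ * ∑ j, ‖g j‖ ^ 2 with hAdef
  set B : ℝ := (n : ℝ)⁻¹ * ∑ j, (f (s j) x - f (s j) xstar
    - ⟪gradient (f (s j)) xstar, x - xstar⟫) with hBdef
  have hD : 0 < ‖H‖ ^ 2 := pow_pos (norm_pos_iff.mpr hHne) 2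
  -- ‖H‖² ≤ A
  have h3 : ‖H‖ ^ 2 ≤ A := by
    have h1 : ‖∑ j, g j‖ ≤ ∑ j, ‖g j‖ := norm_sum_le _ _
    have h2 : (∑ j, ‖g j‖) ^ 2 ≤ (n : ℝ) * ∑ j, ‖g j‖ ^ 2 := by
      have := sq_sum_le_card_mul_sum_sq (s := (Finset.univ : Finset (Fin n)))
        (f := fun j => ‖g j‖)
      simpa using this
    have h1' : ‖∑ j, g j‖ ^ 2 ≤ (∑ j, ‖g j‖) ^ 2 := by
      apply pow_le_pow_left₀ (norm_nonneg _) h1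
    calc ‖H‖ ^ 2 = (n : ℝ)⁻¹ ^ 2 * ‖∑ j, g j‖ ^ 2 := by
          rw [hHdef, norm_smul, Real.norm_eq_abs, abs_of_pos (inv_pos.mpr hn0)]
          ring
      _ ≤ (n : ℝ)⁻¹ ^ 2 * ((n : ℝ) * ∑ j, ‖g j‖ ^ 2) := by
          have := h1'.trans h2
          nlinarith [sq_nonneg ((n:ℝ)⁻¹)]
      _ = A := by rw [hAdef]; field_simp
  have h3' : 1 ≤ A / ‖H‖ ^ 2 := (one_le_div hD).mpr h3
  -- A ≤ 2 L B
  have hAB : A ≤ 2 * L * B := by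
    have hsum : ∑ j, ‖g j‖ ^ 2 ≤ ∑ j, 2 * L * (f (s j) x - f (s j) xstar
        - ⟪gradient (f (s j)) xstar, x - xstar⟫) := by
      apply Finset.sum_le_sum
      intro j _
      exact cocoercivity (f (s j)) (hdiff _) (hconv _) L hL (hsmooth _) x xstar
    rw [hAdef, hBdef]
    calc (n : ℝ)⁻¹ * ∑ j, ‖g j‖ ^ 2
        ≤ (n : ℝ)⁻¹ * ∑ j, 2 * L * (f (s j) x - f (s j) xstar
            - ⟪gradient (f (s j)) xstar, x - xstar⟫) := by
          have := mul_le_mul_of_nonneg_left hsum (inv_nonneg.mpr hn0.le)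
          exact this
      _ = 2 * L * ((n : ℝ)⁻¹ * ∑ j, (f (s j) x - f (s j) xstar
            - ⟪gradient (f (s j)) xstar, x - xstar⟫)) := by
          rw [← Finset.mul_sum]; ring
  refine ⟨?_, ?_, h3'⟩
  · have h1 : L⁻¹ * A ≤ 2 * B := by
      have := mul_le_mul_of_nonneg_left hAB (inv_nonneg.mpr hL.le)
      calc L⁻¹ * A ≤ L⁻¹ * (2 * L * B) := this
        _ = 2 * B := by field_simp
    rw [← mul_div_assoc]
    gcongr
  · exact le_mul_of_one_le_right (inv_nonneg.mpr hL.le) h3'
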